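/- arXiv:1808.10304 — 3 statements merged into one kernel-verified Lean document; each statement's English description precedes it below -/
import Mathlib

section
/- Let ⟨𝒟_i : i ∈ ℕ⟩ be a sequence of open dense subsets of the tree Hechler poset ℍ. Let A ⊆ ℕ be infinite, and suppose that for each i ∈ ℕ (with S_i := {stem(T) : T ∈ 𝒟_i}), for every finite sequence t ∈ ℕ^{<ω} and every ordinal α, if the set B := {z ∈ ℕ : t⌢z is β-S_i-reachable for some β < α} is infinite, then B \ A is infinite. Then for every x : ℕ → ℕ there is a decreasing sequence T_0 ⊇ T_1 ⊇ ⋯ in ℍ with T_i ∈ 𝒟_i for every i, such that the union g of the stems of the T_i is a (total) function ℕ → ℕ and x ≤_T χ_A ⊕ g, where χ_A is the characteristic function of A. (Combinatorial form of the Generic Coding with Help theorem.) -/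
namespace GCH

/-! ### Turing reducibility -/

/-- `RecursiveIn O f` : the partial function `f : ℕ →. ℕ` is partial recursive relative
to the oracle `O`.  This is the relativization of `Nat.Partrec`. -/
inductive RecursiveIn (O : ℕ →. ℕ) : (ℕ →. ℕ) → Prop
  | oracle : RecursiveIn O O
  | zero : RecursiveIn O (pure 0)
  | succ : RecursiveIn O ↑Nat.succ
  | left : RecursiveIn O ↑fun n : ℕ => n.unpair.1
  | right : RecursiveIn O ↑fun n : ℕ => n.unpair.2
  | pair {f g} : RecursiveIn O f → RecursiveIn O g →
      RecursiveIn O fun n => Nat.pair <$> f n <*> g n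
  | comp {f g} : RecursiveIn O f → RecursiveIn O g →
      RecursiveIn O fun n => g n >>= f
  | prec {f g} : RecursiveIn O f → RecursiveIn O g →
      RecursiveIn O (Nat.unpaired fun a n =>
        n.rec (f a) fun y IH => do let i ← IH; g (Nat.pair a (Nat.pair y i)))
  | rfind {f} : RecursiveIn O f →
      RecursiveIn O fun a => Nat.rfind fun n => (fun m => m = 0) <$> f (Nat.pair a n)

/-- Turing reducibility `f ≤_T g` for total functions `ℕ → ℕ`. -/
def TuringReducible (f g : ℕ → ℕ) : Prop :=
  RecursiveIn (g : ℕ →. ℕ) (f : ℕ →. ℕ)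

/-- The Turing join `a ⊕ b` : `(a ⊕ b)(2n) = a(n)`, `(a ⊕ b)(2n+1) = b(n)`. -/
def join (a b : ℕ → ℕ) : ℕ → ℕ := fun n =>
  if n % 2 = 0 then a (n / 2) else b (n / 2)

open Classical in
/-- The characteristic function of `A ⊆ ℕ`. -/
noncomputable def chi (A : Set ℕ) : ℕ → ℕ := fun n => if n ∈ A then 1 else 0

/-! ### The tree Hechler poset `ℍ` -/

/-- A condition in the tree Hechler poset `ℍ` : a nonempty tree `T ⊆ ℕ^{<ω}` closed under
initial segments, having a stem (the longest node comparable with every node of the tree),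
such that every node extending the stem has cofinitely many immediate successors.
The order is inclusion of trees: `T' ≤ T` iff `T'.tree ⊆ T.tree`. -/
structure Hechler where
  /-- the underlying set of finite sequences -/
  tree : Set (List ℕ)
  nonempty : tree.Nonempty
  /-- closed under initial segments -/
  closed : ∀ ⦃s t : List ℕ⦄, s <+: t → t ∈ tree → s ∈ tree
  /-- the stem -/
  stem : List ℕ
  stem_mem : stem ∈ tree
  /-- the stem is comparable with every node of the tree -/
  stem_comparable : ∀ t ∈ tree, stem <+: t ∨ t <+: stem
  /-- the stem is the longest node comparable with every node of the tree -/
  stem_longest : ∀ s ∈ tree, (∀ t ∈ tree, s <+: t ∨ t <+: s) → s.length ≤ stem.length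
  /-- every node extending the stem has cofinitely many immediate successors -/
  succ_cofinite : ∀ t ∈ tree, stem <+: t → {z : ℕ | t ++ [z] ∉ tree}.Finite

/-- `D ⊆ ℍ` is dense: every condition has a subset in `D`. -/
def HDense (D : Set Hechler) : Prop := ∀ T : Hechler, ∃ T' ∈ D, T'.tree ⊆ T.tree

/-- `D ⊆ ℍ` is open: any condition included in a member of `D` is in `D`. -/
def HOpen (D : Set Hechler) : Prop :=
  ∀ T T' : Hechler, T'.tree ⊆ T.tree → T ∈ D → T' ∈ D

/-- The set of stems of members of `D`. -/
def stems (D : Set Hechler) : Set (List ℕ) := {s | ∃ T ∈ D, T.stem = s}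

open Classical in
/-- `ReachAt S α t` : `t` is `α`-`S`-reachable.  `t` is `0`-`S`-reachable iff `t ∈ S`;
for `α > 0`, `t` is `α`-`S`-reachable iff infinitely many `z` are such that `t ⌢ z` is
`β`-`S`-reachable for some `β < α`. -/
noncomputable def ReachAt (S : Set (List ℕ)) (α : Ordinal.{0}) (t : List ℕ) : Prop :=
  if α = 0 then t ∈ S
  else {z : ℕ | ∃ β : Ordinal.{0}, ∃ _ : β < α, ReachAt S β (t ++ [z])}.Infinite
termination_by α

/-- `t` is `S`-reachable iff it is `α`-`S`-reachable for some ordinal `α`. -/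
def SReachable (S : Set (List ℕ)) (t : List ℕ) : Prop := ∃ α : Ordinal.{0}, ReachAt S α t

/-- `t' ⊒_A t` : `t'` extends `t` and takes no new value in `A`. -/
def ExtOutside (A : Set ℕ) (t t' : List ℕ) : Prop :=
  t <+: t' ∧ ∀ (k : ℕ) (h : k < t'.length), t.length ≤ k → t'.get ⟨k, h⟩ ∉ A

/-- The union of the stems of the `T i` is the total function `g : ℕ → ℕ`:
each stem is an initial segment of `g` and the stem lengths are unbounded. -/
def stemsUnion (T : ℕ → Hechler) (g : ℕ → ℕ) : Prop :=
  (∀ (i k : ℕ) (h : k < (T i).stem.length), (T i).stem.get ⟨k, h⟩ = g k) ∧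
    ∀ n : ℕ, ∃ i, n < (T i).stem.length

open Classical in
/-- The real `A`-encoded by `g` (relative to the fixed function `θ`):
its `i`-th value is `η_A(g(n_i))` where `n_0 < n_1 < ⋯` enumerates `{n | g n ∈ A}`
and `η_A = θ ∘ e_A⁻¹` with `e_A` the increasing enumeration of `A`. -/
noncomputable def encodedReal (θ : ℕ → ℕ) (A : Set ℕ) (g : ℕ → ℕ) : ℕ → ℕ :=
  fun i => θ (Nat.count (· ∈ A) (g (Nat.nth (fun n => g n ∈ A) i)))

/-!
Write `Sᵢ` for the set of stems of `Dᵢ`. Every node `t` above the stem of a condition `T` is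
`Sᵢ`-reachable: otherwise the nodes of `T` through `t` that stay non-reachable form a condition
with stem `t` (a non-reachable node has only finitely many reachable successors), and its
extension in `Dᵢ` would have a stem in `Sᵢ` above `t`. The hypothesis on `A` lets one descend
along a reachability witness choosing every new value outside `A`, until a stem in `Sᵢ` is
reached. The generic is built in stages: at stage `i + 1` one value `z ∈ A` is appended whose
index in `A` has first pairing coordinate `x i`, and the stem is then extended into `Dᵢ₊₁` with
no further value in `A`. The values of `g` lying in `A` are exactly these coding values, so
`x i` is read off from `χ_A ⊕ g` by enumerating `{n | g n ∈ A}` and counting `A` below `g n`.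
-/

theorem RecursiveIn.of_partrec {O f : ℕ →. ℕ} (hf : Nat.Partrec f) : RecursiveIn O f := by
  induction hf with
  | zero => exact .zero
  | succ => exact .succ
  | left => exact .left
  | right => exact .right
  | pair _ _ ihf ihg => exact .pair ihf ihg
  | comp _ _ ihf ihg => exact .comp ihf ihg
  | prec _ _ ihf ihg => exact .prec ihf ihg
  | rfind _ ihf => exact .rfind ihf

theorem RecursiveIn.turingReducible {O f : ℕ → ℕ} {F : ℕ →. ℕ} (hF : RecursiveIn (O : ℕ →. ℕ) F)
    (hf : ∀ n, f n ∈ F n) : TuringReducible f O := by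
  unfold TuringReducible
  convert hF using 1
  funext n
  exact (Part.eq_some_iff.2 (hf n)).symm

namespace TuringReducible

variable {O f g : ℕ → ℕ}

theorem refl (f : ℕ → ℕ) : TuringReducible f f := RecursiveIn.oracle

theorem of_primrec (hf : Primrec f) : TuringReducible f O :=
  RecursiveIn.of_partrec (Nat.Partrec.of_primrec (Primrec.nat_iff.mp hf))

theorem comp (hf : TuringReducible f O) (hg : TuringReducible g O) :
    TuringReducible (fun n => f (g n)) O :=
  (RecursiveIn.comp hf hg).turingReducible fun _ =>
    Part.mem_bind (Part.mem_some _) (Part.mem_some _)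

theorem pair (hf : TuringReducible f O) (hg : TuringReducible g O) :
    TuringReducible (fun n => Nat.pair (f n) (g n)) O :=
  (RecursiveIn.pair hf hg).turingReducible fun n => by simp [PFun.coe_val, Seq.seq]

theorem comp₂ {h : ℕ → ℕ → ℕ} (hh : Primrec₂ h) (hf : TuringReducible f O)
    (hg : TuringReducible g O) : TuringReducible (fun n => h (f n) (g n)) O := by
  have hh' : Primrec (Nat.unpaired h) :=
    hh.comp (Primrec.fst.comp Primrec.unpair) (Primrec.snd.comp Primrec.unpair)
  simpa [Nat.unpaired] using (of_primrec hh').comp (hf.pair hg)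

theorem of_succ_eq {F : ℕ → ℕ} {h : ℕ → ℕ → ℕ} (hh : TuringReducible (Nat.unpaired h) O)
    (hsucc : ∀ n, F (n + 1) = h n (F n)) : TuringReducible F O := by
  have hstep : TuringReducible (fun m => h m.unpair.2.unpair.1 m.unpair.2.unpair.2) O := by
    simpa [Nat.unpaired] using hh.comp (of_primrec (Primrec.snd.comp Primrec.unpair))
  have hbase : TuringReducible (fun _ => F 0) O := of_primrec (Primrec.const _)
  have hpair : TuringReducible (fun n => Nat.pair 0 n) O :=
    of_primrec (Primrec₂.natPair.comp (Primrec.const 0) Primrec.id)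
  refine ((RecursiveIn.prec hbase hstep).comp hpair).turingReducible fun n => ?_
  simp only [PFun.coe_val, Part.bind_eq_bind, Part.bind_some, Nat.unpaired, Nat.unpair_pair]
  induction n with
  | zero => exact Part.mem_some _
  | succ n ih =>
    rw [hsucc]
    exact Part.mem_bind ih (Part.mem_some _)

theorem find (hf : TuringReducible f O) (hex : ∀ a, ∃ n, f (Nat.pair a n) = 0) :
    TuringReducible (fun a => Nat.find (hex a)) O :=
  (RecursiveIn.rfind hf).turingReducible fun a =>
    Nat.mem_rfind.2 ⟨by simpa [PFun.coe_val] using Nat.find_spec (hex a),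
      fun hm => by simpa [PFun.coe_val] using Nat.find_min (hex a) hm⟩

theorem join_left (a b : ℕ → ℕ) : TuringReducible a (join a b) := by
  have h2 : Primrec fun n : ℕ => 2 * n := Primrec.nat_mul.comp (Primrec.const 2) Primrec.id
  simpa [join] using (refl (join a b)).comp (of_primrec h2)

theorem join_right (a b : ℕ → ℕ) : TuringReducible b (join a b) := by
  have h2 : Primrec fun n : ℕ => 2 * n + 1 :=
    Primrec.succ.comp (Primrec.nat_mul.comp (Primrec.const 2) Primrec.id)
  have hodd : ∀ n, (2 * n + 1) / 2 = n := by omega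
  simpa [join, hodd] using (refl (join a b)).comp (of_primrec h2)

open Classical in
theorem count_mem {B : Set ℕ} (hB : TuringReducible (chi B) O) :
    TuringReducible (Nat.count (· ∈ B)) O := by
  refine of_succ_eq (h := fun n c => c + chi B n) ?_ fun n => by simp [Nat.count_succ, chi]
  simpa [Nat.unpaired] using comp₂ Primrec.nat_add (of_primrec (Primrec.snd.comp Primrec.unpair))
    (hB.comp (of_primrec (Primrec.fst.comp Primrec.unpair)))

open Classical in
theorem nth_mem {B : Set ℕ} (hB : TuringReducible (chi B) O) (hinf : B.Infinite) :
    TuringReducible (Nat.nth (· ∈ B)) O := by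
  have hle : ∀ a n, a + 1 - Nat.count (· ∈ B) (n + 1) = 0 ↔ Nat.nth (· ∈ B) a ≤ n := by
    intro a n
    rw [Nat.sub_eq_zero_iff_le, Nat.succ_le_iff, ← not_le,
      Nat.count_le_iff_le_nth (p := (· ∈ B)) hinf]
    omega
  have hf : TuringReducible (fun m => m.unpair.1 + 1 - Nat.count (· ∈ B) (m.unpair.2 + 1)) O :=
    comp₂ Primrec.nat_sub (of_primrec (Primrec.succ.comp (Primrec.fst.comp Primrec.unpair)))
      ((count_mem hB).comp (of_primrec (Primrec.succ.comp (Primrec.snd.comp Primrec.unpair))))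
  have hex : ∀ a, ∃ n, (fun m => m.unpair.1 + 1 - Nat.count (· ∈ B) (m.unpair.2 + 1))
      (Nat.pair a n) = 0 :=
    fun a => ⟨Nat.nth (· ∈ B) a, by simp only [Nat.unpair_pair, hle, le_refl]⟩
  have hnth : Nat.nth (· ∈ B) = fun a => Nat.find (hex a) :=
    funext fun a => ((Nat.find_eq_iff _).2 (by simp [hle])).symm
  rw [hnth]
  exact find hf hex

end TuringReducible

theorem encodedReal_turingReducible {θ : ℕ → ℕ} (hθ : Primrec θ) {A : Set ℕ} {g : ℕ → ℕ}
    (hinf : {n | g n ∈ A}.Infinite) : TuringReducible (encodedReal θ A g) (join (chi A) g) := by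
  have hA := TuringReducible.join_left (chi A) g
  have hg := TuringReducible.join_right (chi A) g
  have hnth : TuringReducible (Nat.nth fun n => g n ∈ A) (join (chi A) g) :=
    TuringReducible.nth_mem (B := g ⁻¹' A) (hA.comp hg) hinf
  exact (TuringReducible.of_primrec hθ).comp ((hA.count_mem).comp (hg.comp hnth))

theorem prefix_of_comparable_of_length_le {u s : List ℕ} (h : u <+: s ∨ s <+: u)
    (hl : u.length ≤ s.length) : u <+: s := by
  rcases h with h | h
  · exact h
  · rw [h.eq_of_length_le hl]

theorem subsingleton_setOf_concat_prefix (t s : List ℕ) :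
    {z : ℕ | t ++ [z] <+: s}.Subsingleton := by
  intro z₁ h₁ z₂ h₂
  rcases List.prefix_or_prefix_of_prefix h₁ h₂ with h | h
  · simpa using h.eq_of_length_le (by simp)
  · simpa using (h.eq_of_length_le (by simp)).symm

theorem length_le_of_forall_comparable {t s : List ℕ} {I : Set ℕ} (hI : I.Infinite)
    (hcomp : ∀ z ∈ I, t ++ [z] <+: s ∨ s <+: t ++ [z]) : s.length ≤ t.length := by
  by_contra! hlt
  refine hI ((subsingleton_setOf_concat_prefix t s).anti fun z hz => ?_).finite
  exact prefix_of_comparable_of_length_le (hcomp z hz) (by simpa using hlt)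

namespace Hechler

theorem infinite_setOf_concat_mem (T : Hechler) {t : List ℕ} (ht : t ∈ T.tree)
    (hst : T.stem <+: t) : {z : ℕ | t ++ [z] ∈ T.tree}.Infinite := by
  simpa only [Set.compl_ofPred, not_not] using (T.succ_cofinite t ht hst).infinite_compl

theorem stem_prefix_of_subset {T T' : Hechler} (h : T'.tree ⊆ T.tree) : T.stem <+: T'.stem :=
  prefix_of_comparable_of_length_le (T.stem_comparable _ (h T'.stem_mem))
    (length_le_of_forall_comparable (T'.infinite_setOf_concat_mem T'.stem_mem (List.prefix_refl _))
      fun _ hz => (T.stem_comparable _ (h hz)).symm)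

/-- The field `stem_longest` comes for free: it follows from the branching above the stem. -/
def ofStem (tree : Set (List ℕ)) (closed : ∀ ⦃s t : List ℕ⦄, s <+: t → t ∈ tree → s ∈ tree)
    (stem : List ℕ) (stem_mem : stem ∈ tree) (stem_comparable : ∀ t ∈ tree, stem <+: t ∨ t <+: stem)
    (succ_cofinite : ∀ t ∈ tree, stem <+: t → {z : ℕ | t ++ [z] ∉ tree}.Finite) : Hechler where
  tree := tree
  nonempty := ⟨stem, stem_mem⟩
  closed := closed
  stem := stem
  stem_mem := stem_mem
  stem_comparable := stem_comparable
  stem_longest _ _ hs :=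
    length_le_of_forall_comparable (I := {z | stem ++ [z] ∈ tree})
      (by simpa only [Set.compl_ofPred, not_not] using
        (succ_cofinite stem stem_mem (List.prefix_refl _)).infinite_compl)
      fun _ hz => (hs _ hz).symm
  succ_cofinite := succ_cofinite

def top : Hechler :=
  ofStem Set.univ (fun _ _ _ _ => trivial) [] trivial (fun _ _ => Or.inl List.nil_prefix)
    fun _ _ _ => by simp

def inf (T T₀ : Hechler) (h : T₀.stem ∈ T.tree) (hs : T.stem <+: T₀.stem) : Hechler :=
  ofStem (T.tree ∩ T₀.tree) (fun _ _ hst ht => ⟨T.closed hst ht.1, T₀.closed hst ht.2⟩)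
    T₀.stem ⟨h, T₀.stem_mem⟩ (fun t ht => T₀.stem_comparable t ht.2)
    fun t ht hst => ((T.succ_cofinite t ht.1 (hs.trans hst)).union
      (T₀.succ_cofinite t ht.2 hst)).subset fun _ hz => not_and_or.1 hz

def restrict (T : Hechler) (N : Set (List ℕ)) (t : List ℕ) (ht : t ∈ T.tree)
    (hst : T.stem <+: t) (htN : t ∈ N) (hN : ∀ s ∈ N, t <+: s → {z : ℕ | s ++ [z] ∉ N}.Finite) :
    Hechler :=
  ofStem {s ∈ T.tree | (s <+: t ∨ t <+: s) ∧ ∀ u, t <+: u → u <+: s → u ∈ N}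
    (fun s s' hss' ⟨hs'T, hcomp, hs'N⟩ => by
      refine ⟨T.closed hss' hs'T, ?_, fun u htu hus => hs'N u htu (hus.trans hss')⟩
      rcases hcomp with h | h
      · exact Or.inl (hss'.trans h)
      · exact List.prefix_or_prefix_of_prefix hss' h)
    t ⟨ht, Or.inl (List.prefix_refl t), fun u htu hut => htu.eq_of_length_le hut.length_le ▸ htN⟩
    (fun _ hs => hs.2.1.symm)
    fun s ⟨hsT, _, hsN⟩ hts => by
      refine ((T.succ_cofinite s hsT (hst.trans hts)).union
        (hN s (hsN s hts (List.prefix_refl s)) hts)).subset fun z hz => ?_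
      rw [Set.mem_union, Set.mem_ofPred_eq, Set.mem_ofPred_eq]
      by_contra! hzT
      refine hz ⟨hzT.1, Or.inr (hts.trans (List.prefix_append _ _)), fun u htu hu => ?_⟩
      rcases List.prefix_concat_iff.1 hu with rfl | hu
      · exact hzT.2
      · exact hsN u htu hu

end Hechler

theorem ExtOutside.refl (A : Set ℕ) (t : List ℕ) : ExtOutside A t t :=
  ⟨List.prefix_refl t, fun _ h hk => absurd h (not_lt.2 hk)⟩

theorem ExtOutside.concat {A : Set ℕ} {z : ℕ} (t : List ℕ) (hz : z ∉ A) :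
    ExtOutside A t (t ++ [z]) := by
  refine ⟨List.prefix_append _ _, fun k h hk => ?_⟩
  obtain rfl : k = t.length := by simp at h; omega
  simpa using hz

theorem ExtOutside.trans {A : Set ℕ} {t u v : List ℕ} (htu : ExtOutside A t u)
    (huv : ExtOutside A u v) : ExtOutside A t v := by
  refine ⟨htu.1.trans huv.1, fun k h hk => ?_⟩
  by_cases hku : k < u.length
  · simpa [← huv.1.getElem hku] using htu.2 k hku hk
  · exact huv.2 k h (not_lt.1 hku)

section Reachability

variable {S : Set (List ℕ)} {t : List ℕ}

def reachSucc (S : Set (List ℕ)) (α : Ordinal.{0}) (t : List ℕ) : Set ℕ :=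
  {z | ∃ β : Ordinal.{0}, ∃ _ : β < α, ReachAt S β (t ++ [z])}

theorem reachAt_zero : ReachAt S 0 t ↔ t ∈ S := by
  rw [ReachAt]; simp

theorem reachAt_of_ne_zero {α : Ordinal.{0}} (hα : α ≠ 0) :
    ReachAt S α t ↔ (reachSucc S α t).Infinite := by
  rw [ReachAt]; simp [hα, reachSucc]

theorem sReachable_of_infinite (h : {z : ℕ | SReachable S (t ++ [z])}.Infinite) :
    SReachable S t := by
  let ρ : ℕ → Ordinal.{0} := fun z => sInf {β | ReachAt S β (t ++ [z])}
  refine ⟨Order.succ (⨆ z, ρ z), (reachAt_of_ne_zero (Order.succ_ne_bot _)).2 (h.mono ?_)⟩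
  intro z hz
  exact ⟨ρ z, Order.lt_succ_of_le (le_ciSup (Ordinal.bddAbove_of_small) z), csInf_mem hz⟩

theorem sReachable_of_mem_tree {D : Set Hechler} (hD : HDense D) (T : Hechler)
    (ht : t ∈ T.tree) (hst : T.stem <+: t) : SReachable (stems D) t := by
  by_contra hnr
  let P := T.restrict {u | ¬ SReachable (stems D) u} t ht hst hnr fun s hs _ => by
    by_contra hinf
    exact hs (sReachable_of_infinite (by simpa using hinf))
  obtain ⟨T', hT'D, hsub⟩ := hD P
  exact (hsub T'.stem_mem).2.2 _ (Hechler.stem_prefix_of_subset hsub) (List.prefix_refl _)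
    ⟨0, reachAt_zero.2 ⟨T', hT'D, rfl⟩⟩

theorem exists_extOutside_of_reachAt {A : Set ℕ}
    (hS : ∀ t α, (reachSucc S α t).Infinite → (reachSucc S α t \ A).Infinite)
    (T : Hechler) {α : Ordinal.{0}} (hα : ReachAt S α t) (ht : t ∈ T.tree)
    (hst : T.stem <+: t) : ∃ t' ∈ T.tree, t' ∈ S ∧ ExtOutside A t t' := by
  induction α using WellFoundedLT.induction generalizing t with
  | _ α IH =>
    rcases eq_or_ne α 0 with rfl | hα0
    · exact ⟨t, ht, reachAt_zero.1 hα, ExtOutside.refl A t⟩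
    obtain ⟨z, ⟨⟨β, hβ, hz⟩, hzA⟩, hzT⟩ :=
      ((hS t α ((reachAt_of_ne_zero hα0).1 hα)).sdiff (T.succ_cofinite t ht hst)).nonempty
    obtain ⟨t', ht'T, ht'S, hext⟩ :=
      IH β hβ hz (not_not.1 hzT) (hst.trans (List.prefix_append _ _))
    exact ⟨t', ht'T, ht'S, (ExtOutside.concat t hzA).trans hext⟩

end Reachability

section Forcing

variable {D : Set Hechler} {A : Set ℕ}

theorem exists_mem_extOutside (hDd : HDense D) (hDo : HOpen D)
    (hS : ∀ t α, (reachSucc (stems D) α t).Infinite → (reachSucc (stems D) α t \ A).Infinite)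
    (T : Hechler) {t : List ℕ} (ht : t ∈ T.tree) (hst : T.stem <+: t) :
    ∃ T' ∈ D, T'.tree ⊆ T.tree ∧ ExtOutside A t T'.stem := by
  obtain ⟨α, hα⟩ := sReachable_of_mem_tree hDd T ht hst
  obtain ⟨_, ht', ⟨T₀, hT₀, rfl⟩, hext⟩ := exists_extOutside_of_reachAt hS T hα ht hst
  exact ⟨T.inf T₀ ht' (hst.trans hext.1), hDo T₀ _ (fun _ h => h.2) hT₀, fun _ h => h.1, hext⟩

open Classical in
theorem infinite_setOf_mem_code_eq (hA : A.Infinite) (c : ℕ) :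
    {z | z ∈ A ∧ (Nat.count (· ∈ A) z).unpair.1 = c}.Infinite := by
  have hmono : StrictMono fun j => Nat.nth (· ∈ A) (Nat.pair c j) :=
    (Nat.nth_strictMono hA).comp fun _ _ h => Nat.pair_lt_pair_right c h
  refine (Set.infinite_range_of_injective hmono.injective).mono ?_
  rintro _ ⟨j, rfl⟩
  exact ⟨Nat.nth_mem_of_infinite hA _, by simp [Nat.count_nth_of_infinite (p := (· ∈ A)) hA]⟩

open Classical in
theorem exists_coding_extension (hDd : HDense D) (hDo : HOpen D)
    (hS : ∀ t α, (reachSucc (stems D) α t).Infinite → (reachSucc (stems D) α t \ A).Infinite)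
    (hA : A.Infinite) (T : Hechler) (c : ℕ) :
    ∃ T' ∈ D, T'.tree ⊆ T.tree ∧ ∃ z ∈ A, (Nat.count (· ∈ A) z).unpair.1 = c ∧
      ExtOutside A (T.stem ++ [z]) T'.stem := by
  obtain ⟨z, ⟨hzA, hzc⟩, hzT⟩ := ((infinite_setOf_mem_code_eq hA c).sdiff
    (T.succ_cofinite _ T.stem_mem (List.prefix_refl _))).nonempty
  obtain ⟨T', hT'D, hsub, hext⟩ :=
    exists_mem_extOutside hDd hDo hS T (not_not.1 hzT) (List.prefix_append _ _)
  exact ⟨T', hT'D, hsub, z, hzA, hzc, hext⟩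

end Forcing

structure CodingChain (A : Set ℕ) (s : ℕ → List ℕ) (z : ℕ → ℕ) : Prop where
  base : ExtOutside A [] (s 0)
  mem : ∀ i, z i ∈ A
  step : ∀ i, ExtOutside A (s i ++ [z i]) (s (i + 1))

/-- The default value is never used along a `CodingChain`, where `n < (s (n + 1)).length`. -/
def stemLimit (s : ℕ → List ℕ) (n : ℕ) : ℕ := (s (n + 1)).getD n 0

namespace CodingChain

variable {A : Set ℕ} {s : ℕ → List ℕ} {z : ℕ → ℕ}

theorem length_lt_succ (hc : CodingChain A s z) (i : ℕ) : (s i).length < (s (i + 1)).length := by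
  simpa using (hc.step i).1.length_le

theorem prefix_of_le (hc : CodingChain A s z) {i j : ℕ} (hij : i ≤ j) : s i <+: s j := by
  induction j, hij using Nat.le_induction with
  | base => exact List.prefix_refl _
  | succ j _ ih => exact ih.trans ((List.prefix_append _ _).trans (hc.step j).1)

theorem strictMono_length (hc : CodingChain A s z) : StrictMono fun i => (s i).length :=
  strictMono_nat_of_lt_succ hc.length_lt_succ

theorem lt_length (hc : CodingChain A s z) (n : ℕ) : n < (s (n + 1)).length :=
  hc.strictMono_length.le_apply.trans_lt' (Nat.lt_succ_self n)

theorem getElem_eq (hc : CodingChain A s z) {i k : ℕ} (h : k < (s i).length) :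
    (s i)[k] = stemLimit s k := by
  rw [stemLimit, List.getD_eq_getElem _ _ (hc.lt_length k)]
  rcases le_total i (k + 1) with hik | hik
  · exact (hc.prefix_of_le hik).getElem h
  · exact ((hc.prefix_of_le hik).getElem (hc.lt_length k)).symm

theorem stemLimit_length (hc : CodingChain A s z) (i : ℕ) : stemLimit s (s i).length = z i := by
  have h : (s i).length < (s i ++ [z i]).length := by simp
  rw [← hc.getElem_eq ((hc.step i).1.length_le.trans_lt' h), ← (hc.step i).1.getElem h]
  simp

theorem stemLimit_mem_iff (hc : CodingChain A s z) (n : ℕ) :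
    stemLimit s n ∈ A ↔ n ∈ Set.range fun i => (s i).length := by
  refine ⟨fun hn => ?_, fun ⟨i, hi⟩ => hi ▸ hc.stemLimit_length i ▸ hc.mem i⟩
  suffices ∀ j k (hk : k < (s j).length), (s j)[k] ∈ A → ∃ i, (s i).length = k from
    this (n + 1) n (hc.lt_length n) (hc.getElem_eq _ ▸ hn)
  intro j
  induction j with
  | zero => exact fun k hk hA => absurd hA (by simpa using hc.base.2 k hk (Nat.zero_le k))
  | succ j ih =>
    intro k hk hA
    rcases lt_trichotomy k (s j).length with hlt | rfl | hgt
    · exact ih k hlt (by rwa [(hc.prefix_of_le j.le_succ).getElem hlt])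
    · exact ⟨j, rfl⟩
    · exact absurd hA (by simpa using (hc.step j).2 k hk (by simpa using hgt))

theorem infinite_setOf_stemLimit_mem (hc : CodingChain A s z) :
    {n | stemLimit s n ∈ A}.Infinite := by
  have hrange : {n | stemLimit s n ∈ A} = Set.range fun i => (s i).length :=
    Set.ext hc.stemLimit_mem_iff
  rw [hrange]
  exact Set.infinite_range_of_injective hc.strictMono_length.injective

theorem nth_stemLimit_mem (hc : CodingChain A s z) (i : ℕ) :
    Nat.nth (fun n => stemLimit s n ∈ A) i = (s i).length := by
  have := Nat.nth_comp_of_strictMono (n := i) hc.strictMono_length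
    (fun k hk => (hc.stemLimit_mem_iff k).1 hk)
    (fun hf => absurd hf hc.infinite_setOf_stemLimit_mem)
  simpa only [hc.stemLimit_length, hc.mem, Nat.nth_true] using this.symm

open Classical in
theorem encodedReal_stemLimit (hc : CodingChain A s z) (θ : ℕ → ℕ) (i : ℕ) :
    encodedReal θ A (stemLimit s) i = θ (Nat.count (· ∈ A) (z i)) := by
  simp only [encodedReal, hc.nth_stemLimit_mem, hc.stemLimit_length]

end CodingChain

open Classical in
theorem exists_codingChain {D : ℕ → Set Hechler} {A : Set ℕ} (hDopen : ∀ i, HOpen (D i))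
    (hDdense : ∀ i, HDense (D i)) (hA : A.Infinite)
    (hS : ∀ i t α, (reachSucc (stems (D i)) α t).Infinite →
      (reachSucc (stems (D i)) α t \ A).Infinite)
    (x : ℕ → ℕ) :
    ∃ (T : ℕ → Hechler) (z : ℕ → ℕ), (∀ i, (T (i + 1)).tree ⊆ (T i).tree) ∧ (∀ i, T i ∈ D i) ∧
      CodingChain A (fun i => (T i).stem) z ∧ ∀ i, (Nat.count (· ∈ A) (z i)).unpair.1 = x i := by
  obtain ⟨T₀, hT₀, -, hbase⟩ := exists_mem_extOutside (hDdense 0) (hDopen 0) (hS 0) Hechler.top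
    (t := []) trivial List.nil_prefix
  choose next hnext hsub z hzA hzc hext using fun i c T =>
    exists_coding_extension (hDdense (i + 1)) (hDopen (i + 1)) (hS (i + 1)) hA T c
  let T : ℕ → Hechler := fun i => Nat.rec T₀ (fun i Ti => next i (x i) Ti) i
  refine ⟨T, fun i => z i (x i) (T i), fun i => hsub _ _ _, fun i => ?_,
    ⟨hbase, fun i => hzA _ _ _, fun i => hext _ _ _⟩, fun i => hzc _ _ _⟩
  cases i
  · exact hT₀
  · exact hnext _ _ _

/-- **Generic Coding with Help** (combinatorial form). -/
theorem generic_coding_with_help (D : ℕ → Set Hechler)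
    (hDopen : ∀ i, HOpen (D i)) (hDdense : ∀ i, HDense (D i))
    (A : Set ℕ) (hA : A.Infinite)
    (hstick : ∀ (i : ℕ) (t : List ℕ) (α : Ordinal.{0}),
      {z : ℕ | ∃ β : Ordinal.{0}, ∃ _ : β < α,
        ReachAt (stems (D i)) β (t ++ [z])}.Infinite →
      ({z : ℕ | ∃ β : Ordinal.{0}, ∃ _ : β < α,
        ReachAt (stems (D i)) β (t ++ [z])} \ A).Infinite)
    (x : ℕ → ℕ) :
    ∃ T : ℕ → Hechler,
      (∀ i, (T (i + 1)).tree ⊆ (T i).tree) ∧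
      (∀ i, T i ∈ D i) ∧
      ∃ g : ℕ → ℕ, stemsUnion T g ∧
        TuringReducible x (join (chi A) g) := by
  obtain ⟨T, z, hsub, hmem, hchain, hcode⟩ := exists_codingChain hDopen hDdense hA hstick x
  refine ⟨T, hsub, hmem, stemLimit fun i => (T i).stem,
    ⟨fun _ _ h => hchain.getElem_eq h, fun n => ⟨n + 1, hchain.lt_length n⟩⟩, ?_⟩
  have hx : encodedReal (fun n => n.unpair.1) A (stemLimit fun i => (T i).stem) = x :=
    funext fun i => (hchain.encodedReal_stemLimit _ i).trans (hcode i)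
  exact hx ▸ encodedReal_turingReducible (Primrec.fst.comp Primrec.unpair)
    hchain.infinite_setOf_stemLimit_mem

end GCH
end

section
/- For every a : ℕ → ℕ there exists an infinite set A ⊆ ℕ such that A ≡_T a (i.e. the characteristic function of A and a are mutually Turing reducible) and A is computable from every infinite subset of itself: for every infinite B ⊆ A, the characteristic function of A is Turing reducible to the characteristic function of B. -/
namespace GCH

/-!
Take for `A` the set of codes of the finite initial segments of `a`, the code of
`a 0, …, a n` being `⟨code of a 0, …, a (n-1), a n⟩ + 1`. Codes grow strictly along `a`, and the
elements of `A` below an element `e ∈ A` are exactly the iterated parents of `e`, so membership of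
`m` in `A` is decided primitive recursively from any `e ∈ A` with `m ≤ e`. Such an `e` is computed
from `a` (the code of `a 0, …, a (m-1)`) and from any infinite `B ⊆ A` (the least element of `B`
above `m`). Conversely, `A` lists the codes in increasing order and `a n` is read off the `n+1`-st.
-/

namespace RecursiveIn

variable {O : ℕ →. ℕ}

theorem of_eq {f g : ℕ →. ℕ} (hf : RecursiveIn O f) (h : ∀ n, f n = g n) :
    RecursiveIn O g :=
  funext h ▸ hf

theorem of_partrec_s5 {f : ℕ →. ℕ} (hf : Nat.Partrec f) : RecursiveIn O f := by
  induction hf with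
  | zero => exact .zero
  | succ => exact .succ
  | left => exact .left
  | right => exact .right
  | pair _ _ ihf ihg => exact .pair ihf ihg
  | comp _ _ ihf ihg => exact .comp ihf ihg
  | prec _ _ ihf ihg => exact .prec ihf ihg
  | rfind _ ih => exact .rfind ih

theorem of_computable {f : ℕ → ℕ} (hf : Computable f) : RecursiveIn O f :=
  of_partrec_s5 (Partrec.nat_iff.mp hf)

theorem comp_total {f g : ℕ → ℕ} (hf : RecursiveIn O f) (hg : RecursiveIn O g) :
    RecursiveIn O ↑(fun n => f (g n)) :=
  (RecursiveIn.comp hf hg).of_eq fun n => Part.bind_some (g n) _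

theorem comp₂ {h : ℕ → ℕ → ℕ} {f g : ℕ → ℕ} (hh : Computable₂ h) (hf : RecursiveIn O f)
    (hg : RecursiveIn O g) : RecursiveIn O ↑(fun n => h (f n) (g n)) := by
  have hpair : RecursiveIn O ↑(fun n => Nat.pair (f n) (g n)) :=
    (RecursiveIn.pair hf hg).of_eq fun n => by simp [PFun.coe_val, Seq.seq]
  have hunpaired : Computable (Nat.unpaired h) :=
    hh.comp (Computable.fst.comp Computable.unpair) (Computable.snd.comp Computable.unpair)
  simpa [Nat.unpaired] using (of_computable hunpaired).comp_total hpair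

theorem of_succ {f : ℕ → ℕ} {s : ℕ → ℕ → ℕ} (hs : RecursiveIn O ↑(Nat.unpaired s))
    (hf : ∀ n, f (n + 1) = s n (f n)) : RecursiveIn O f := by
  have hstep : RecursiveIn O ↑(fun q : ℕ => Nat.unpaired s q.unpair.2) :=
    hs.comp_total (of_computable (Computable.snd.comp Computable.unpair))
  have hprec := RecursiveIn.prec (of_computable (Computable.const (f 0))) hstep
  have hrec : RecursiveIn O ↑(fun q : ℕ => f q.unpair.2) := by
    refine hprec.of_eq fun q => ?_
    simp only [Nat.unpaired, PFun.coe_val]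
    induction q.unpair.2 with
    | zero => rfl
    | succ n ih =>
      simp only [Nat.unpair_pair, Part.bind_eq_bind] at ih ⊢
      simp [ih, hf]
  simpa using hrec.comp_total
    (of_computable (Primrec₂.natPair.comp (Primrec.const 0) Primrec.id).to_comp)

theorem sInf_setOf_eq_zero {p : ℕ → ℕ → ℕ} (hp : RecursiveIn O ↑(Nat.unpaired p))
    (h : ∀ x, ∃ t, p x t = 0) : RecursiveIn O ↑(fun x => sInf {t | p x t = 0}) := by
  refine (RecursiveIn.rfind hp).of_eq fun x => Part.eq_some_iff.mpr (Nat.mem_rfind.mpr ?_)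
  constructor
  · simpa [PFun.coe_val] using Nat.sInf_mem (s := {t | p x t = 0}) (h x)
  · intro m hm
    simpa [PFun.coe_val] using Nat.notMem_of_lt_sInf hm

theorem chi_of_primrecRel {A : Set ℕ} {R : ℕ → ℕ → Prop} (hR : PrimrecRel R) {e : ℕ → ℕ}
    (he : RecursiveIn O ↑e) (hA : ∀ m, m ∈ A ↔ R m (e m)) : RecursiveIn O ↑(chi A) := by
  classical
  have hdecide : Computable₂ fun m x => if R m x then 1 else 0 :=
    (Primrec.ite hR (Primrec.const 1) (Primrec.const 0)).to_comp
  refine (comp₂ hdecide (of_computable Computable.id) he).of_eq fun m => ?_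
  simp [chi, hA]

end RecursiveIn

theorem chi_eq_one_iff {S : Set ℕ} {n : ℕ} : chi S n = 1 ↔ n ∈ S := by
  by_cases h : n ∈ S <;> simp [chi, h]

noncomputable def nextIn (S : Set ℕ) (x : ℕ) : ℕ := sInf {t | t ∈ S ∧ x < t}

theorem nextIn_spec {S : Set ℕ} (hS : S.Infinite) (x : ℕ) : nextIn S x ∈ S ∧ x < nextIn S x :=
  Nat.sInf_mem (hS.exists_gt x)

theorem nextIn_le {S : Set ℕ} {x y : ℕ} (hy : y ∈ S) (hxy : x < y) : nextIn S x ≤ y :=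
  Nat.sInf_le ⟨hy, hxy⟩

theorem recursiveIn_nextIn {S : Set ℕ} (hS : S.Infinite) : RecursiveIn ↑(chi S) ↑(nextIn S) := by
  let p (x t : ℕ) : ℕ := if chi S t = 1 ∧ x < t then 0 else 1
  have htest : Computable₂ fun (b q : ℕ) => if b = 1 ∧ q.unpair.1 < q.unpair.2 then 0 else 1 :=
    (Primrec.ite (PrimrecPred.and (Primrec.eq.comp Primrec.fst (Primrec.const 1))
      (Primrec.nat_lt.comp (Primrec.fst.comp (Primrec.unpair.comp Primrec.snd))
        (Primrec.snd.comp (Primrec.unpair.comp Primrec.snd))))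
      (Primrec.const 0) (Primrec.const 1)).to_comp
  have hp : RecursiveIn ↑(chi S) ↑(Nat.unpaired p) :=
    (RecursiveIn.comp₂ htest (RecursiveIn.oracle.comp_total (.of_computable
      (Computable.snd.comp Computable.unpair))) (.of_computable Computable.id)).of_eq fun q => rfl
  have hzero : ∀ x t, p x t = 0 ↔ t ∈ S ∧ x < t := by
    simp [p, chi_eq_one_iff]
  refine (RecursiveIn.sInf_setOf_eq_zero hp fun x => ?_).of_eq fun x => ?_
  · simpa [hzero] using hS.exists_gt x
  · simp only [hzero]; rfl

def prefixCode (a : ℕ → ℕ) : ℕ → ℕ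
  | 0 => 0
  | n + 1 => Nat.pair (prefixCode a n) (a n) + 1

def parentCode (c : ℕ) : ℕ := (c - 1).unpair.1

section prefixCode

variable (a : ℕ → ℕ)

theorem unpair_prefixCode_succ_sub_one (n : ℕ) :
    (prefixCode a (n + 1) - 1).unpair = (prefixCode a n, a n) := by
  simp [prefixCode]

theorem strictMono_prefixCode : StrictMono (prefixCode a) :=
  strictMono_nat_of_lt_succ fun _ => Nat.lt_succ_of_le (Nat.left_le_pair _ _)

theorem iterate_parentCode_prefixCode (j n : ℕ) :
    parentCode^[j] (prefixCode a n) = prefixCode a (n - j) := by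
  induction j with
  | zero => rfl
  | succ j ih =>
    rw [Function.iterate_succ_apply', ih]
    rcases Nat.lt_or_ge j n with hj | hj
    · obtain ⟨k, hk⟩ : ∃ k, n - j = k + 1 := ⟨n - j - 1, by omega⟩
      rw [hk, parentCode, unpair_prefixCode_succ_sub_one, show n - (j + 1) = k by omega]
    · rw [Nat.sub_eq_zero_of_le hj, Nat.sub_eq_zero_of_le (by omega)]
      rfl

theorem mem_range_prefixCode_iff {m e : ℕ} (he : e ∈ Set.range (prefixCode a)) (hme : m ≤ e) :
    m ∈ Set.range (prefixCode a) ↔ ∃ j ≤ e, parentCode^[j] e = m := by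
  obtain ⟨n, rfl⟩ := he
  simp only [iterate_parentCode_prefixCode]
  constructor
  · rintro ⟨k, rfl⟩
    have hkn : k ≤ n := (strictMono_prefixCode a).le_iff_le.mp hme
    refine ⟨n - k, ?_, by rw [Nat.sub_sub_self hkn]⟩
    have := (strictMono_prefixCode a).le_apply (x := n)
    omega
  · rintro ⟨j, -, rfl⟩
    exact ⟨n - j, rfl⟩

theorem infinite_range_prefixCode : (Set.range (prefixCode a)).Infinite :=
  Set.infinite_range_of_injective (strictMono_prefixCode a).injective

theorem primrecRel_exists_iterate_parentCode :
    PrimrecRel fun m e => ∃ j ≤ e, parentCode^[j] e = m := by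
  have hparent : Primrec parentCode := Primrec.fst.comp (Primrec.unpair.comp Primrec.pred)
  have hiter : PrimrecRel fun (j : ℕ) (p : ℕ × ℕ) => parentCode^[j] p.2 = p.1 :=
    Primrec.eq.comp (Primrec.nat_iterate Primrec.fst (Primrec.snd.comp Primrec.snd)
      (hparent.comp Primrec.snd).to₂) (Primrec.fst.comp Primrec.snd)
  exact (hiter.exists_mem_list.comp (Primrec.list_range.comp (Primrec.succ.comp Primrec.snd))
    Primrec.id).of_eq fun p => by simp

theorem nextIn_range_prefixCode (n : ℕ) :
    nextIn (Set.range (prefixCode a)) (prefixCode a n) = prefixCode a (n + 1) := by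
  have hmono := strictMono_prefixCode a
  refine le_antisymm (nextIn_le ⟨n + 1, rfl⟩ (hmono n.lt_succ_self)) ?_
  obtain ⟨⟨k, hk⟩, hlt⟩ := nextIn_spec (infinite_range_prefixCode a) (prefixCode a n)
  rw [← hk] at hlt ⊢
  exact hmono.monotone (hmono.lt_iff_lt.mp hlt)

theorem recursiveIn_prefixCode : RecursiveIn ↑a ↑(prefixCode a) := by
  refine RecursiveIn.of_succ (s := fun n c => Nat.pair c (a n) + 1) ?_ fun n => rfl
  exact RecursiveIn.comp₂ (h := fun x y => Nat.pair x y + 1)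
    (Primrec.succ.comp₂ Primrec₂.natPair).to_comp
    (.of_computable (Computable.snd.comp Computable.unpair))
    (RecursiveIn.oracle.comp_total (.of_computable (Computable.fst.comp Computable.unpair)))

theorem recursiveIn_chi_range_prefixCode_of_bound {O : ℕ →. ℕ} {e : ℕ → ℕ}
    (he : RecursiveIn O ↑e) (he_mem : ∀ m, e m ∈ Set.range (prefixCode a))
    (hle : ∀ m, m ≤ e m) : RecursiveIn O ↑(chi (Set.range (prefixCode a))) :=
  RecursiveIn.chi_of_primrecRel primrecRel_exists_iterate_parentCode he fun m =>
    mem_range_prefixCode_iff a (he_mem m) (hle m)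

theorem turingReducible_self_chi_range_prefixCode :
    TuringReducible a (chi (Set.range (prefixCode a))) := by
  have hcode : RecursiveIn ↑(chi (Set.range (prefixCode a))) ↑(prefixCode a) :=
    RecursiveIn.of_succ (s := fun _ c => nextIn (Set.range (prefixCode a)) c)
      ((recursiveIn_nextIn (infinite_range_prefixCode a)).comp_total
        (.of_computable (Computable.snd.comp Computable.unpair)))
      fun n => (nextIn_range_prefixCode a n).symm
  refine ((RecursiveIn.of_computable (Computable.snd.comp (Computable.unpair.comp
    Computable.pred))).comp_total (hcode.comp_total (.of_computable Computable.succ))).of_eq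
    fun n => ?_
  simp [unpair_prefixCode_succ_sub_one]

end prefixCode

/-- For every `a : ℕ → ℕ` there is an infinite `A ⊆ ℕ` with `A ≡_T a` which is
computable from every infinite subset of itself. -/
theorem exists_equiv_selfcomputable_set (a : ℕ → ℕ) :
    ∃ A : Set ℕ, A.Infinite ∧
      TuringReducible (chi A) a ∧ TuringReducible a (chi A) ∧
      ∀ B : Set ℕ, B ⊆ A → B.Infinite → TuringReducible (chi A) (chi B) := by
  refine ⟨Set.range (prefixCode a), infinite_range_prefixCode a, ?_,
    turingReducible_self_chi_range_prefixCode a, fun B hBA hB => ?_⟩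
  · exact recursiveIn_chi_range_prefixCode_of_bound a (recursiveIn_prefixCode a)
      (fun m => ⟨m, rfl⟩) fun _ => (strictMono_prefixCode a).le_apply
  · exact recursiveIn_chi_range_prefixCode_of_bound a (recursiveIn_nextIn hB)
      (fun m => hBA (nextIn_spec hB m).1) fun m => (nextIn_spec hB m).2.le

end GCH
end

section
/- Let S ⊆ ℕ^{<ω} and let t ∈ ℕ^{<ω} be a finite sequence that is not S-reachable. Then there exists a condition T in the tree Hechler poset ℍ with stem(T) = t such that no node of T extending t is S-reachable; in particular, no node of T extending t belongs to S, and hence no T' ∈ ℍ with T' ⊆ T has its stem in S. -/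
namespace GCH

/-!
The condition is the tree of sequences `s` comparable with `t` such that no node between `t`
and `s` is `S`-reachable. A node that is not `S`-reachable has only finitely many
`S`-reachable immediate successors, so every node of this tree beyond `t` keeps cofinitely
many successors. Any condition below it has its stem comparable with `t`, and cofinitely many
successors of that stem rule out a stem strictly below `t`.
-/

section Prefix

variable {α : Type*}

theorem getElem_eq_of_comparable_append_singleton {s w : List α} {z : α}
    (h : w <+: s ++ [z] ∨ s ++ [z] <+: w) (hlt : s.length < w.length) : w[s.length] = z := by
  rcases h with h | h
  · obtain rfl : w = s ++ [z] := h.eq_of_length <| by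
      have := h.length_le
      simp only [List.length_append, List.length_singleton] at this ⊢
      omega
    simp
  · rw [← h.getElem (by simp)]
    simp

theorem exists_mem_not_comparable [Infinite α] {X : Set (List α)} {s w : List α}
    (hX : {z : α | s ++ [z] ∉ X}.Finite) (hlt : s.length < w.length) :
    ∃ u ∈ X, ¬ (w <+: u ∨ u <+: w) := by
  obtain ⟨z, hz⟩ := (hX.union (Set.finite_singleton w[s.length])).infinite_compl.nonempty
  simp only [Set.compl_union, Set.mem_inter_iff, Set.mem_compl_iff, Set.mem_ofPred_eq,
    Set.mem_singleton_iff, not_not] at hz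
  exact ⟨s ++ [z], hz.1, fun h => hz.2 (getElem_eq_of_comparable_append_singleton h hlt).symm⟩

variable (P : List α → Prop) (t : List α)

def predTree : Set (List α) :=
  {s | s <+: t ∨ (t <+: s ∧ ∀ u, t <+: u → u <+: s → P u)}

variable {P t}

theorem mem_predTree_of_prefix {s u : List α} (hsu : s <+: u) (hu : u ∈ predTree P t) :
    s ∈ predTree P t := by
  rcases hu with hu | ⟨htu, hu⟩
  · exact Or.inl (hsu.trans hu)
  · rcases List.prefix_or_prefix_of_prefix hsu htu with h | h
    · exact Or.inl h
    · exact Or.inr ⟨h, fun v hv hvs => hu v hv (hvs.trans hsu)⟩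

theorem comparable_of_mem_predTree {s : List α} (hs : s ∈ predTree P t) : t <+: s ∨ s <+: t :=
  hs.symm.imp_left And.left

theorem of_mem_predTree (ht : P t) {s : List α} (hs : s ∈ predTree P t) (hts : t <+: s) : P s := by
  rcases hs with hs | ⟨-, hs⟩
  · exact hs.eq_of_length_le hts.length_le ▸ ht
  · exact hs s hts (List.prefix_refl s)

theorem append_mem_predTree (ht : P t) {s : List α} (hs : s ∈ predTree P t) (hts : t <+: s)
    {z : α} (hz : P (s ++ [z])) : s ++ [z] ∈ predTree P t := by
  refine Or.inr ⟨hts.trans (List.prefix_append _ _), fun u htu hus => ?_⟩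
  rcases List.prefix_concat_iff.mp hus with rfl | hus
  · exact hz
  · exact of_mem_predTree ht (mem_predTree_of_prefix hus hs) htu

end Prefix

namespace Hechler

theorem prefix_stem_of_forall_comparable (T : Hechler) {t : List ℕ}
    (h : ∀ s ∈ T.tree, t <+: s ∨ s <+: t) : t <+: T.stem := by
  rcases h T.stem T.stem_mem with hstem | hstem
  · exact hstem
  by_contra hnot
  have hlt : T.stem.length < t.length :=
    lt_of_le_of_ne hstem.length_le fun hlen => hnot (hstem.eq_of_length hlen ▸ List.prefix_refl _)
  obtain ⟨u, hu, hinc⟩ :=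
    exists_mem_not_comparable (T.succ_cofinite _ T.stem_mem (List.prefix_refl _)) hlt
  exact hinc (h u hu)

def ofPred (P : List ℕ → Prop) (t : List ℕ) (ht : P t)
    (hP : ∀ s, P s → {z : ℕ | ¬ P (s ++ [z])}.Finite) : Hechler where
  tree := predTree P t
  nonempty := ⟨t, Or.inl (List.prefix_refl t)⟩
  closed _ _ := mem_predTree_of_prefix
  stem := t
  stem_mem := Or.inl (List.prefix_refl t)
  stem_comparable _ := comparable_of_mem_predTree
  stem_longest s hs hcmp := by
    rcases comparable_of_mem_predTree hs with hts | hst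
    · by_contra! hlt
      have hsucc : {z : ℕ | t ++ [z] ∉ predTree P t}.Finite := (hP t ht).subset fun z hz hPz =>
        hz (append_mem_predTree ht (Or.inl (List.prefix_refl t)) (List.prefix_refl t) hPz)
      obtain ⟨u, hu, hinc⟩ := exists_mem_not_comparable hsucc hlt
      exact hinc (hcmp u hu)
    · exact hst.length_le
  succ_cofinite s hs hts := (hP s (of_mem_predTree ht hs hts)).subset fun z hz hPz =>
    hz (append_mem_predTree ht hs hts hPz)

end Hechler

theorem SReachable.of_mem {S : Set (List ℕ)} {s : List ℕ} (h : s ∈ S) : SReachable S s :=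
  ⟨0, by rw [ReachAt]; simpa using h⟩

theorem finite_setOf_sReachable_append {S : Set (List ℕ)} {s : List ℕ}
    (hs : ¬ SReachable S s) : {z : ℕ | SReachable S (s ++ [z])}.Finite := by
  by_contra hinf
  choose rank hrank using fun z : {z : ℕ // SReachable S (s ++ [z])} => z.2
  -- `s` is reachable at rank one above the supremum of the ranks of its reachable successors
  refine hs ⟨(⨆ z, rank z) + 1, ?_⟩
  rw [ReachAt, if_neg (add_pos_of_right zero_lt_one _).ne']
  refine Set.Infinite.mono (fun z hz => ?_) hinf
  exact ⟨rank ⟨z, hz⟩, Order.lt_add_one_iff.mpr (Ordinal.le_iSup rank _), hrank ⟨z, hz⟩⟩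

/-- If `t` is not `S`-reachable then there is a condition with stem `t` none of whose
nodes extending `t` is `S`-reachable; in particular none is in `S`, and no stronger
condition has its stem in `S`. -/
theorem tree_avoiding_S (S : Set (List ℕ)) (t : List ℕ) (ht : ¬ SReachable S t) :
    ∃ T : Hechler, T.stem = t ∧
      (∀ s ∈ T.tree, t <+: s → ¬ SReachable S s) ∧
      (∀ s ∈ T.tree, t <+: s → s ∉ S) ∧
      ∀ T' : Hechler, T'.tree ⊆ T.tree → T'.stem ∉ S := by
  let T := Hechler.ofPred (fun s => ¬ SReachable S s) t ht fun s hs => by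
    simpa only [not_not] using finite_setOf_sReachable_append hs
  have hT : ∀ s ∈ T.tree, t <+: s → ¬ SReachable S s := fun s => of_mem_predTree ht
  refine ⟨T, rfl, hT, fun s hs hts hsS => hT s hs hts (.of_mem hsS), fun T' hsub hstem => ?_⟩
  have hcmp : ∀ s ∈ T'.tree, t <+: s ∨ s <+: t := fun s hs => comparable_of_mem_predTree (hsub hs)
  exact hT _ (hsub T'.stem_mem) (T'.prefix_stem_of_forall_comparable hcmp) (.of_mem hstem)

end GCH
end
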